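/- arXiv:1810.03393 — 2 statements merged into one kernel-verified Lean document; each statement's English description precedes it below -/
import Mathlib

section
/- Suppose D is partitioned into clusters C_1, …, C_k such that within each cluster any two points are density connected, no point of C_i is density connected to any point of C_j for i ≠ j, each cluster has a unique mode m_i (the unique density maximiser of C_i), and for every non-mode x ∈ C_i the nearest density-connected higher-density neighbour η′_x exists and lies in C_i. Then every C_i is an η-density-connected cluster: C_i = { x ∈ D | Connect_ε^τ(x, m_i) ∧ ∀ j ≠ i, LDCpath(x, m_j) > LDCpath(x, m_i) }. -/
/-- Density-connectivity (Definition 6): `x` and `y` are density connected if there is a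
sequence of `p ≥ 2` distinct points of `D` starting at `x` and ending at `y`, with
consecutive distances at most `ε`, all interior points having density at least `τ`,
and, in the case `p = 2`, at least one endpoint having density at least `τ`.
(Here the sequence has `p + 2` points, so `p ≥ 2` automatically.) -/
def Connect {α : Type*} [MetricSpace α] (D : Finset α) (ρ : α → ℝ) (ε τ : ℝ)
    (x y : α) : Prop :=
  ∃ p : ℕ, ∃ z : Fin (p + 2) → α,
    Function.Injective z ∧ (∀ i, z i ∈ D) ∧
    z 0 = x ∧ z (Fin.last (p + 1)) = y ∧
    (∀ i : Fin (p + 1), dist (z i.castSucc) (z i.succ) ≤ ε) ∧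
    (∀ i : Fin (p + 2), 0 < (i : ℕ) → (i : ℕ) < p + 1 → τ ≤ ρ (z i)) ∧
    (p = 0 → τ ≤ ρ x ∨ τ ≤ ρ y)

open Classical in
/-- `Lpath η x y` is the number of points on the η-linked path from `x` to `y`
(the η-orbit of `x` up to the first time it reaches `y`), or `∞` if the orbit never
reaches `y`.  In particular `Lpath η x x = 1`. -/
noncomputable def Lpath {α : Type*} (η : α → α) (x y : α) : ℕ∞ :=
  if h : ∃ i : ℕ, η^[i] x = y then ((Nat.find h : ℕ∞) + 1) else ⊤

/-!
Along the orbit of `η'` the density strictly increases until the orbit hits the mode, and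
the orbit of a point of `C i` cannot leave `C i` before then; since `C i` is finite, the
orbit reaches `m i` before it can meet any other mode. Hence `Lpath η' x (m i)` is the
strictly smallest of the `Lpath η' x (m j)` exactly when `x ∈ C i`.
-/

open Classical in
theorem exists_iterate_eq_and_forall_le_iterate_mem {α β : Type*} [Preorder β]
    {s : Finset α} {f : α → α} {ρ : α → β} {m : α}
    (hf : ∀ x ∈ s, x ≠ m → f x ∈ s ∧ ρ x < ρ (f x)) :
    ∀ x ∈ s, ∃ N, f^[N] x = m ∧ ∀ n ≤ N, f^[n] x ∈ s := by
  intro x hx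
  by_cases hxm : x = m
  · exact ⟨0, hxm, fun n hn => by rwa [Nat.le_zero.mp hn]⟩
  obtain ⟨hfx, hρ⟩ := hf x hx hxm
  have hdecr : (s.filter fun y => ρ (f x) < ρ y).card < (s.filter fun y => ρ x < ρ y).card := by
    refine Finset.card_lt_card ⟨fun y hy => ?_, fun hss => ?_⟩
    · simp only [Finset.mem_filter] at hy ⊢
      exact ⟨hy.1, hρ.trans hy.2⟩
    · have := hss (Finset.mem_filter.mpr ⟨hfx, hρ⟩)
      exact lt_irrefl _ (Finset.mem_filter.mp this).2
  obtain ⟨N, hN, hNs⟩ := exists_iterate_eq_and_forall_le_iterate_mem hf (f x) hfx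
  refine ⟨N + 1, hN, fun n hn => ?_⟩
  cases n with
  | zero => exact hx
  | succ n => exact hNs n (by omega)
termination_by x => (s.filter fun y => ρ x < ρ y).card

theorem Lpath_lt_Lpath_of_iterate_eq {α : Type*} {η : α → α} {x y z : α} {N : ℕ}
    (hy : η^[N] x = y) (hz : ∀ n ≤ N, η^[n] x ≠ z) : Lpath η x y < Lpath η x z := by
  classical
  have hex : ∃ n, η^[n] x = y := ⟨N, hy⟩
  have hfind : Nat.find hex ≤ N := Nat.find_le hy
  rw [Lpath, dif_pos hex, Lpath]
  split_ifs with hez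
  · have : N < Nat.find hez := by
      by_contra! hle
      exact hz _ hle (Nat.find_spec hez)
    exact_mod_cast (show Nat.find hex + 1 < Nat.find hez + 1 by omega)
  · exact WithTop.coe_lt_top _

theorem partition_of_density_connected_clusters_is_dc_clusters_general
    {α : Type*} [MetricSpace α] (D : Finset α) (ρ : α → ℝ) (ε τ : ℝ)
    (η' : α → α) {k : ℕ} (C : Fin k → Finset α) (m : Fin k → α)
    (hcover : ∀ x ∈ D, ∃ i, x ∈ C i)
    (hsub : ∀ i, C i ⊆ D)
    (hdisj : ∀ i j, i ≠ j → ∀ x ∈ C i, x ∉ C j)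
    (hwithin : ∀ i, ∀ x ∈ C i, ∀ y ∈ C i, x ≠ y → Connect D ρ ε τ x y)
    (hmode : ∀ i, m i ∈ C i ∧ ∀ x ∈ C i, x ≠ m i → ρ x < ρ (m i))
    (hη' : ∀ i, ∀ x ∈ C i, x ≠ m i →
      η' x ∈ C i ∧ ρ x < ρ (η' x) ∧ Connect D ρ ε τ x (η' x) ∧
      ∀ y ∈ D, ρ x < ρ y → Connect D ρ ε τ x y → dist x (η' x) ≤ dist x y) :
    ∀ i, (C i : Set α) =
      {x | x ∈ D ∧ (x = m i ∨ Connect D ρ ε τ x (m i)) ∧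
        ∀ j, j ≠ i → Lpath η' x (m i) < Lpath η' x (m j)} := by
  have hnearest : ∀ i j, j ≠ i → ∀ x ∈ C i, Lpath η' x (m i) < Lpath η' x (m j) := by
    intro i j hji x hx
    obtain ⟨N, hN, hNs⟩ := exists_iterate_eq_and_forall_le_iterate_mem
      (fun y hy hym => ⟨(hη' i y hy hym).1, (hη' i y hy hym).2.1⟩) x hx
    exact Lpath_lt_Lpath_of_iterate_eq hN fun n hn hnj =>
      hdisj j i hji (m j) (hmode j).1 (hnj ▸ hNs n hn)
  intro i
  ext x
  constructor
  · intro hx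
    exact ⟨hsub i hx, (eq_or_ne x (m i)).imp_right (hwithin i x hx (m i) (hmode i).1),
      fun j hji => hnearest i j hji x hx⟩
  · rintro ⟨hxD, -, hlt⟩
    obtain ⟨j, hxj⟩ := hcover x hxD
    obtain rfl | hji := eq_or_ne j i
    · exact hxj
    · exact absurd (hlt j hji) (hnearest j i hji.symm x hxj).asymm

/-- Lemma 6: if `D` is partitioned into clusters that are internally density
connected, mutually non-density-connected, each with a unique mode, and each
closed under the nearest density-connected higher-density neighbour map `η'`
(which for a non-mode point lies in the same cluster, has strictly higher density,
is density connected to it, and is nearest among such points), then every cluster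
is an η-density-connected cluster. -/
theorem partition_of_density_connected_clusters_is_dc_clusters
    {α : Type*} [MetricSpace α] (D : Finset α) (ρ : α → ℝ) (ε τ : ℝ)
    (η' : α → α) {k : ℕ} (C : Fin k → Finset α) (m : Fin k → α)
    (hcover : ∀ x ∈ D, ∃ i, x ∈ C i)
    (hsub : ∀ i, C i ⊆ D)
    (hdisj : ∀ i j, i ≠ j → ∀ x ∈ C i, x ∉ C j)
    (hwithin : ∀ i, ∀ x ∈ C i, ∀ y ∈ C i, x ≠ y → Connect D ρ ε τ x y)
    (hacross : ∀ i j, i ≠ j → ∀ x ∈ C i, ∀ y ∈ C j, ¬ Connect D ρ ε τ x y)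
    (hmode : ∀ i, m i ∈ C i ∧ ∀ x ∈ C i, x ≠ m i → ρ x < ρ (m i))
    (hη' : ∀ i, ∀ x ∈ C i, x ≠ m i →
      η' x ∈ C i ∧ ρ x < ρ (η' x) ∧ Connect D ρ ε τ x (η' x) ∧
      ∀ y ∈ D, ρ x < ρ y → Connect D ρ ε τ x y → dist x (η' x) ≤ dist x y) :
    ∀ i, (C i : Set α) =
      {x | x ∈ D ∧ (x = m i ∨ Connect D ρ ε τ x (m i)) ∧
        ∀ j, j ≠ i → Lpath η' x (m i) < Lpath η' x (m j)} :=
  partition_of_density_connected_clusters_is_dc_clusters_general D ρ ε τ η' C m hcover hsub hdisj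
    hwithin hmode hη'
end

section
/- If x and y belong to different clusters of a partition in which no point of one cluster is density connected (Connect_ε^τ) to any point of another, then LDCpath(x, y) = ∞, i.e. there is no η-density-connected path from x to y. -/
theorem lpath_eq_top_of_forall_iterate_ne {α : Type*} {η : α → α} {x y : α}
    (h : ∀ n, η^[n] x ≠ y) : Lpath η x y = ⊤ :=
  dif_neg (not_exists.2 h)

theorem mapsTo_cluster_of_not_rel_across {α : Type*} {R : α → α → Prop} {η : α → α}
    {D : Finset α} {k : ℕ} {C : Fin k → Finset α}
    (hcover : ∀ x ∈ D, ∃ i, x ∈ C i) (hsub : ∀ i, C i ⊆ D)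
    (hacross : ∀ i j, i ≠ j → ∀ x ∈ C i, ∀ y ∈ C j, ¬ R x y)
    (hη : ∀ z ∈ D, η z = z ∨ (η z ∈ D ∧ R z (η z))) (i : Fin k) :
    Set.MapsTo η (C i) (C i) := by
  intro z hz
  rcases hη z (hsub i hz) with hfix | ⟨hmemD, hrel⟩
  · rwa [hfix]
  · obtain ⟨j, hj⟩ := hcover _ hmemD
    obtain rfl : j = i := by_contra fun hji => hacross i j (Ne.symm hji) z hz _ hj hrel
    exact hj

/-- If `x` and `y` lie in different clusters of a partition of `D` in which no point of
one cluster is density connected to any point of another, then there is no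
η-density-connected path from `x` to `y`: `LDCpath(x, y) = ∞`.  (Each step of the
`η'`-orbit either stays put or moves to a point of `D` density connected to the
current point, hence never leaves the current cluster.) -/
theorem ldcpath_infinite_across_clusters
    {α : Type*} [MetricSpace α] (D : Finset α) (ρ : α → ℝ) (ε τ : ℝ)
    (η' : α → α) {k : ℕ} (C : Fin k → Finset α)
    (hcover : ∀ x ∈ D, ∃ i, x ∈ C i)
    (hsub : ∀ i, C i ⊆ D)
    (hdisj : ∀ i j, i ≠ j → ∀ x ∈ C i, x ∉ C j)
    (hacross : ∀ i j, i ≠ j → ∀ x ∈ C i, ∀ y ∈ C j, ¬ Connect D ρ ε τ x y)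
    (hη' : ∀ z ∈ D, η' z = z ∨ (η' z ∈ D ∧ Connect D ρ ε τ z (η' z)))
    (i j : Fin k) (hij : i ≠ j) (x : α) (hx : x ∈ C i) (y : α) (hy : y ∈ C j) :
    Lpath η' x y = ⊤ := by
  have horbit := (mapsTo_cluster_of_not_rel_across hcover hsub hacross hη' i).iterate
  exact lpath_eq_top_of_forall_iterate_ne fun n hn => hdisj i j hij _ (hn ▸ horbit n hx) hy
end
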